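/- The modular automorphisms scale the modular element by the inverse of the scaling constant: σ(δ) = ν⁻¹·δ and σ'(δ) = ν⁻¹·δ. -/

import Mathlib

/-!
Since `δ` is group-like, `S(δ) = δ⁻¹`, so `δ S(c) = S(c δ⁻¹)` and `φ(δ S(c)) = φ(c)`, whereas
`φ(S(c) δ) = φ(S²(c)) = ν φ(c)`. As `S` is surjective this gives `φ(δ b) = ν⁻¹ φ(b δ)` for all `b`,
which by faithfulness of `φ` is `σ(δ) = ν⁻¹ δ`. Comparing the two modular automorphisms through
`ψ(a) = φ(a δ)` gives `σ'(a) δ = δ σ(a)`, hence also `σ'(δ) = ν⁻¹ δ`.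
-/

open TensorProduct HopfAlgebra

section GroupLike

variable {R A : Type*} [CommSemiring R] [Semiring A] [HopfAlgebra R A]

lemma IsGroupLikeElem.antipode_eq_unitsInv {u : Aˣ} (hu : IsGroupLikeElem R (u : A)) :
    antipode R (u : A) = ↑u⁻¹ :=
  (Units.inv_eq_of_mul_eq_one_left hu.antipode_mul_cancel).symm

lemma IsGroupLikeElem.mul_antipode_eq {u : Aˣ} (hu : IsGroupLikeElem R (u : A)) (a : A) :
    (u : A) * antipode R a = antipode R (a * ↑u⁻¹) := by
  rw [antipode_mul_antidistrib, hu.unitsInv.antipode_eq_unitsInv, inv_inv]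

end GroupLike

section ModularElement

variable {K A : Type*} [Field K] [Ring A] [HopfAlgebra K A] {φ : A →ₗ[K] K} {δ : Aˣ}

lemma eq_of_forall_apply_mul_eq (hφ : ∀ a : A, (∀ b : A, φ (b * a) = 0) → a = 0) {x y : A}
    (h : ∀ b : A, φ (b * x) = φ (b * y)) : x = y :=
  sub_eq_zero.mp <| hφ _ fun b => by rw [mul_sub, map_sub, h, sub_self]

lemma apply_modularElement_mul_antipode (hδg : IsGroupLikeElem K (δ : A))
    (hδ : ∀ a : A, φ (antipode K a) = φ (a * δ)) (c : A) :
    φ (δ * antipode K c) = φ c := by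
  rw [hδg.mul_antipode_eq, hδ, mul_assoc, Units.inv_mul, mul_one]

lemma apply_modularElement_mul (hδg : IsGroupLikeElem K (δ : A))
    (hδ : ∀ a : A, φ (antipode K a) = φ (a * δ)) {ν : K} (hν0 : ν ≠ 0)
    (hν : ∀ a : A, φ (antipode K (antipode K a)) = ν * φ a)
    (hS : Function.Surjective (antipode K (A := A))) (b : A) :
    φ (δ * b) = ν⁻¹ * φ (b * δ) := by
  obtain ⟨c, rfl⟩ := hS b
  rw [apply_modularElement_mul_antipode hδg hδ, ← hδ, hν, inv_mul_cancel_left₀ hν0]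

lemma modularAutomorphism_apply_modularElement (hφ : ∀ a : A, (∀ b : A, φ (b * a) = 0) → a = 0)
    {σ : A → A} (hσ : ∀ a b : A, φ (a * b) = φ (b * σ a)) (hδg : IsGroupLikeElem K (δ : A))
    (hδ : ∀ a : A, φ (antipode K a) = φ (a * δ)) {ν : K} (hν0 : ν ≠ 0)
    (hν : ∀ a : A, φ (antipode K (antipode K a)) = ν * φ a)
    (hS : Function.Surjective (antipode K (A := A))) :
    σ δ = ν⁻¹ • (δ : A) :=
  eq_of_forall_apply_mul_eq hφ fun b => by
    rw [← hσ, apply_modularElement_mul hδg hδ hν0 hν hS, mul_smul_comm, map_smul, smul_eq_mul]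

lemma modularAutomorphism_antipode_mul_modularElement
    (hφ : ∀ a : A, (∀ b : A, φ (b * a) = 0) → a = 0)
    {σ σ' : A → A} (hσ : ∀ a b : A, φ (a * b) = φ (b * σ a))
    (hσ' : ∀ a b : A, φ (antipode K (a * b)) = φ (antipode K (b * σ' a)))
    (hδ : ∀ a : A, φ (antipode K a) = φ (a * δ)) (a : A) :
    σ' a * δ = δ * σ a :=
  eq_of_forall_apply_mul_eq hφ fun b =>
    calc φ (b * (σ' a * δ)) = φ (antipode K (b * σ' a)) := by rw [hδ, mul_assoc]
      _ = φ (antipode K (a * b)) := (hσ' a b).symm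
      _ = φ (a * (b * δ)) := by rw [hδ, mul_assoc]
      _ = φ (b * (δ * σ a)) := by rw [hσ, mul_assoc]

end ModularElement

theorem modular_automorphism_modular_element
    {A : Type*} [Ring A] [HopfAlgebra ℂ A]
    (hS : Function.Bijective (antipode (R := ℂ) (A := A)))
    (φ : A →ₗ[ℂ] ℂ)
    (hφf2 : ∀ a : A, (∀ b : A, φ (b * a) = 0) → a = 0)
    (σ : A ≃ₐ[ℂ] A) (hσ : ∀ a b : A, φ (a * b) = φ (b * σ a))
    (σ' : A ≃ₐ[ℂ] A)
    (hσ' : ∀ a b : A, φ (antipode (R := ℂ) (a * b)) = φ (antipode (R := ℂ) (b * σ' a)))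
    (δ : Aˣ)
    (hδΔ : Coalgebra.comul (R := ℂ) ((δ : A)) = (δ : A) ⊗ₜ[ℂ] (δ : A))
    (hδε : Coalgebra.counit (R := ℂ) ((δ : A)) = 1)
    (hδ : ∀ a : A, φ (antipode (R := ℂ) a) = φ (a * δ))
    (ν : ℂ) (hν0 : ν ≠ 0)
    (hν : ∀ a : A, φ (antipode (R := ℂ) (antipode (R := ℂ) a)) = ν * φ a) :
    σ (δ : A) = ν⁻¹ • (δ : A) ∧ σ' (δ : A) = ν⁻¹ • (δ : A) := by
  have hδg : IsGroupLikeElem ℂ (δ : A) := ⟨hδε, hδΔ⟩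
  have hσδ : σ (δ : A) = ν⁻¹ • (δ : A) :=
    modularAutomorphism_apply_modularElement hφf2 hσ hδg hδ hν0 hν hS.surjective
  refine ⟨hσδ, (Units.mul_left_inj δ).mp ?_⟩
  rw [modularAutomorphism_antipode_mul_modularElement hφf2 hσ hσ' hδ, hσδ, mul_smul_comm,
    smul_mul_assoc]
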